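/- arXiv:2210.01698 — 2 statements merged into one kernel-verified Lean document; each statement's English description precedes it below -/
import Mathlib

section
/- Define J : ℝ → ℝ by J(s) = 6s² + 20s + 17 for s ≤ −2, J(s) = (s+1)⁴ for −2 < s < −1, J(s) = 0 for −1 ≤ s ≤ 1, J(s) = (s−1)⁴ for 1 < s < 2, and J(s) = 6s² − 20s + 17 for s ≥ 2. Then J is twice continuously differentiable on ℝ, nonnegative, convex, vanishes exactly on the interval [−1, 1], and its second derivative satisfies 0 ≤ J''(s) ≤ 12 for all s ∈ ℝ. -/
/-!
Write `J(s) = ψ(s - 1) + ψ(-1 - s)`, where the one-sided penalty `ψ` vanishes on `(-∞, 0]`,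
equals `t⁴` on `[0, 1]` and `6t² - 8t + 3` beyond; its pieces agree to second order at `0` and
`1`, so gluing them keeps `ψ` twice differentiable with `ψ''` continuous and valued in
`[0, 12]`. The two arguments `s - 1` and `-1 - s` sum to `-2`, so at most one of them is positive
and `J'' = ψ''(s - 1) + ψ''(-1 - s)` is a single value of `ψ''`.
-/

open Set

/-- The piecewise-defined obstacle approximation function `J`. -/
noncomputable def obstacleApprox (s : ℝ) : ℝ :=
  if s ≤ -2 then 6 * s ^ 2 + 20 * s + 17
  else if s < -1 then (s + 1) ^ 4
  else if s ≤ 1 then 0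
  else if s < 2 then (s - 1) ^ 4
  else 6 * s ^ 2 - 20 * s + 17

theorem hasDerivAt_ite_le {F : Type*} [NormedAddCommGroup F] [NormedSpace ℝ F]
    {f g f' g' : ℝ → F} {a : ℝ} (hf : ∀ x, HasDerivAt f (f' x) x) (hg : ∀ x, HasDerivAt g (g' x) x)
    (ha : f a = g a) (ha' : f' a = g' a) (x : ℝ) :
    HasDerivAt (fun x => if x ≤ a then f x else g x) (if x ≤ a then f' x else g' x) x := by
  rcases lt_trichotomy x a with hx | rfl | hx
  · rw [if_pos hx.le]
    refine (hf x).congr_of_eventuallyEq ?_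
    filter_upwards [Iic_mem_nhds hx] with y hy using if_pos hy
  · rw [if_pos le_rfl]
    have hleft : HasDerivWithinAt (fun y => if y ≤ x then f y else g y) (f' x) (Iic x) x :=
      (hf x).hasDerivWithinAt.congr (fun y hy => if_pos hy) (if_pos le_rfl)
    have hright : HasDerivWithinAt (fun y => if y ≤ x then f y else g y) (f' x) (Ici x) x := by
      refine ha' ▸ (hg x).hasDerivWithinAt.congr (fun y hy => ?_) (by rw [if_pos le_rfl, ha])
      split_ifs with h
      · rw [le_antisymm h hy, ha]
      · rfl
    simpa [Iic_union_Ici] using hleft.union hright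
  · rw [if_neg hx.not_ge]
    refine (hg x).congr_of_eventuallyEq ?_
    filter_upwards [Ioi_mem_nhds hx] with y hy using if_neg (not_le.mpr hy)

theorem contDiff_two_iff_deriv {𝕜 F : Type*} [NontriviallyNormedField 𝕜]
    [NormedAddCommGroup F] [NormedSpace 𝕜 F] {f : 𝕜 → F} :
    ContDiff 𝕜 2 f ↔
      Differentiable 𝕜 f ∧ Differentiable 𝕜 (deriv f) ∧ Continuous (deriv (deriv f)) := by
  rw [show (2 : WithTop ℕ∞) = 1 + 1 from rfl, contDiff_succ_iff_deriv, contDiff_one_iff_deriv]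
  simp

noncomputable def obstaclePenalty (t : ℝ) : ℝ :=
  if t ≤ 0 then 0 else if t ≤ 1 then t ^ 4 else 6 * t ^ 2 - 8 * t + 3

noncomputable def obstaclePenaltyDeriv (t : ℝ) : ℝ :=
  if t ≤ 0 then 0 else if t ≤ 1 then 4 * t ^ 3 else 12 * t - 8

noncomputable def obstaclePenaltyDeriv2 (t : ℝ) : ℝ :=
  if t ≤ 0 then 0 else if t ≤ 1 then 12 * t ^ 2 else 12

theorem hasDerivAt_obstaclePenalty (t : ℝ) :
    HasDerivAt obstaclePenalty (obstaclePenaltyDeriv t) t := by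
  have hquartic (t : ℝ) : HasDerivAt (fun t => t ^ 4) (4 * t ^ 3) t := by
    simpa using hasDerivAt_pow 4 t
  have hquadratic (t : ℝ) : HasDerivAt (fun t => 6 * t ^ 2 - 8 * t + 3) (12 * t - 8) t :=
    ((((hasDerivAt_pow 2 t).const_mul 6).sub ((hasDerivAt_id t).const_mul 8)).add_const
      3).congr_deriv (by norm_num; ring)
  exact hasDerivAt_ite_le (fun t => hasDerivAt_const t 0)
    (hasDerivAt_ite_le hquartic hquadratic (by norm_num) (by norm_num)) (by norm_num)
    (by norm_num) t

theorem hasDerivAt_obstaclePenaltyDeriv (t : ℝ) :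
    HasDerivAt obstaclePenaltyDeriv (obstaclePenaltyDeriv2 t) t := by
  have hcubic (t : ℝ) : HasDerivAt (fun t => 4 * t ^ 3) (12 * t ^ 2) t :=
    ((hasDerivAt_pow 3 t).const_mul 4).congr_deriv (by norm_num; ring)
  have hlinear (t : ℝ) : HasDerivAt (fun t => 12 * t - 8) 12 t := by
    simpa using ((hasDerivAt_id t).const_mul 12).sub_const 8
  exact hasDerivAt_ite_le (fun t => hasDerivAt_const t 0)
    (hasDerivAt_ite_le hcubic hlinear (by norm_num) (by norm_num)) (by norm_num)
    (by norm_num) t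

@[fun_prop]
theorem continuous_obstaclePenaltyDeriv2 : Continuous obstaclePenaltyDeriv2 :=
  continuous_const.if_le
    ((continuous_const.mul (continuous_pow 2)).if_le continuous_const continuous_id
      continuous_const fun t ht => by norm_num [ht])
    continuous_id continuous_const fun t ht => by norm_num [ht]

theorem obstaclePenalty_nonneg (t : ℝ) : 0 ≤ obstaclePenalty t := by
  unfold obstaclePenalty
  split_ifs
  · exact le_rfl
  · positivity
  · nlinarith [sq_nonneg (3 * t - 2)]

theorem obstaclePenalty_eq_zero_iff {t : ℝ} : obstaclePenalty t = 0 ↔ t ≤ 0 := by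
  unfold obstaclePenalty
  split_ifs with h₀
  · simp [h₀]
  · simp [h₀, (lt_of_not_ge h₀).ne']
  · simp only [h₀, iff_false]
    nlinarith [sq_nonneg (3 * t - 2)]

theorem obstaclePenaltyDeriv2_nonneg (t : ℝ) : 0 ≤ obstaclePenaltyDeriv2 t := by
  unfold obstaclePenaltyDeriv2
  split_ifs <;> positivity

theorem obstaclePenaltyDeriv2_le (t : ℝ) : obstaclePenaltyDeriv2 t ≤ 12 := by
  unfold obstaclePenaltyDeriv2
  split_ifs
  · norm_num
  · nlinarith
  · exact le_rfl

theorem obstaclePenaltyDeriv2_of_nonpos {t : ℝ} (ht : t ≤ 0) : obstaclePenaltyDeriv2 t = 0 :=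
  if_pos ht

theorem obstaclePenaltyDeriv2_add_le {u v : ℝ} (h : u + v ≤ 0) :
    obstaclePenaltyDeriv2 u + obstaclePenaltyDeriv2 v ≤ 12 := by
  rcases le_total u 0 with hu | hu
  · simpa [obstaclePenaltyDeriv2_of_nonpos hu] using obstaclePenaltyDeriv2_le v
  · simpa [obstaclePenaltyDeriv2_of_nonpos (show v ≤ 0 by linarith)]
      using obstaclePenaltyDeriv2_le u

theorem obstacleApprox_eq_obstaclePenalty_add (s : ℝ) :
    obstacleApprox s = obstaclePenalty (s - 1) + obstaclePenalty (-1 - s) := by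
  unfold obstacleApprox obstaclePenalty
  -- the junctions `s = ±2` fall into different branches of the two definitions
  split_ifs <;> try first | linarith | ring1
  · obtain rfl : s = -2 := by linarith
    norm_num
  · obtain rfl : s = 2 := by linarith
    norm_num

theorem hasDerivAt_obstacleApprox (s : ℝ) :
    HasDerivAt obstacleApprox
      (obstaclePenaltyDeriv (s - 1) - obstaclePenaltyDeriv (-1 - s)) s := by
  rw [show obstacleApprox = _ from funext obstacleApprox_eq_obstaclePenalty_add]
  exact (((hasDerivAt_obstaclePenalty (s - 1)).comp_sub_const s 1).add
    ((hasDerivAt_obstaclePenalty (-1 - s)).comp_const_sub (-1) s)).congr_deriv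
    (sub_eq_add_neg _ _).symm

theorem hasDerivAt_deriv_obstacleApprox (s : ℝ) :
    HasDerivAt (deriv obstacleApprox)
      (obstaclePenaltyDeriv2 (s - 1) + obstaclePenaltyDeriv2 (-1 - s)) s := by
  rw [show deriv obstacleApprox = _ from funext fun s => (hasDerivAt_obstacleApprox s).deriv]
  exact (((hasDerivAt_obstaclePenaltyDeriv (s - 1)).comp_sub_const s 1).sub
    ((hasDerivAt_obstaclePenaltyDeriv (-1 - s)).comp_const_sub (-1) s)).congr_deriv
    (sub_neg_eq_add _ _)

/-- The obstacle approximation function `J` is `C²`, nonnegative, convex, vanishes exactly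
on `[-1, 1]`, and its second derivative satisfies `0 ≤ J'' ≤ 12`. -/
theorem obstacle_approx_properties :
    ContDiff ℝ 2 obstacleApprox ∧
    (∀ s : ℝ, 0 ≤ obstacleApprox s) ∧
    ConvexOn ℝ Set.univ obstacleApprox ∧
    (∀ s : ℝ, obstacleApprox s = 0 ↔ (-1 ≤ s ∧ s ≤ 1)) ∧
    (∀ s : ℝ, 0 ≤ deriv (deriv obstacleApprox) s ∧ deriv (deriv obstacleApprox) s ≤ 12) := by
  have hJ'' (s : ℝ) : deriv (deriv obstacleApprox) s =
      obstaclePenaltyDeriv2 (s - 1) + obstaclePenaltyDeriv2 (-1 - s) :=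
    (hasDerivAt_deriv_obstacleApprox s).deriv
  have hJ''_nonneg (s : ℝ) : 0 ≤ deriv (deriv obstacleApprox) s :=
    hJ'' s ▸ add_nonneg (obstaclePenaltyDeriv2_nonneg _) (obstaclePenaltyDeriv2_nonneg _)
  refine ⟨?_, fun s => ?_, ?_, fun s => ?_, fun s => ⟨hJ''_nonneg s, ?_⟩⟩
  · refine contDiff_two_iff_deriv.mpr ⟨fun s => (hasDerivAt_obstacleApprox s).differentiableAt,
      fun s => (hasDerivAt_deriv_obstacleApprox s).differentiableAt, ?_⟩
    rw [show deriv (deriv obstacleApprox) = _ from funext hJ'']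
    fun_prop
  · rw [obstacleApprox_eq_obstaclePenalty_add]
    exact add_nonneg (obstaclePenalty_nonneg _) (obstaclePenalty_nonneg _)
  · exact convexOn_univ_of_deriv2_nonneg (fun s => (hasDerivAt_obstacleApprox s).differentiableAt)
      (fun s => (hasDerivAt_deriv_obstacleApprox s).differentiableAt) hJ''_nonneg
  · rw [obstacleApprox_eq_obstaclePenalty_add, add_eq_zero_iff_of_nonneg
      (obstaclePenalty_nonneg _) (obstaclePenalty_nonneg _), obstaclePenalty_eq_zero_iff,
      obstaclePenalty_eq_zero_iff]
    constructor <;> rintro ⟨h₁, h₂⟩ <;> constructor <;> linarith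
  · rw [hJ'']
    exact obstaclePenaltyDeriv2_add_le (by linarith)
end

section
/- Let c₀ ≥ 0 and let F : ℝ → ℝ be a differentiable function with F ≥ 0 such that the map s ↦ F(s) + ½ c₀ s² is convex. Then for all φ, λ ∈ ℝ the inequality F'(φ)(λ − φ) ≤ F(λ) + (3/2) c₀ φ² + c₀ λ² holds. -/
/-! The tangent-line inequality for the convex function `F + ½c₀s²` at `φ` gives
`F'(φ)(λ - φ) ≤ F(λ) - F(φ) + ½c₀(λ - φ)²`; it remains to drop `F(φ) ≥ 0` and to use
`½(λ - φ)² ≤ φ² + λ²`. -/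

theorem ConvexOn.add_deriv_mul_sub_le {S : Set ℝ} {f : ℝ → ℝ} {f' x y : ℝ}
    (hfc : ConvexOn ℝ S f) (hx : x ∈ S) (hy : y ∈ S) (hf : HasDerivAt f f' x) :
    f x + f' * (y - x) ≤ f y := by
  rcases lt_trichotomy x y with hxy | rfl | hyx
  · have hslope := hfc.le_slope_of_hasDerivAt hx hy hxy hf
    rw [slope_def_field, le_div_iff₀ (sub_pos.mpr hxy)] at hslope
    linarith
  · simp
  · have hslope := hfc.slope_le_of_hasDerivAt hy hx hyx hf
    rw [slope_def_field, div_le_iff₀ (sub_pos.mpr hyx)] at hslope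
    linarith

theorem mul_sub_le_of_convexOn_add_sq_of_hasDerivAt {c : ℝ} {F : ℝ → ℝ} {F' φ : ℝ}
    (hconv : ConvexOn ℝ Set.univ (fun s : ℝ => F s + (1 / 2) * c * s ^ 2))
    (hF : HasDerivAt F F' φ) (l : ℝ) :
    F' * (l - φ) ≤ F l - F φ + (1 / 2) * c * (l - φ) ^ 2 := by
  have hsq : HasDerivAt (fun s : ℝ => (1 / 2) * c * s ^ 2) (c * φ) φ :=
    ((hasDerivAt_pow 2 φ).const_mul ((1 / 2) * c)).congr_deriv (by norm_num; ring)
  have htangent := hconv.add_deriv_mul_sub_le (Set.mem_univ φ) (Set.mem_univ l) (hF.add hsq)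
  linarith

/-- If `F ≥ 0` is differentiable and `s ↦ F(s) + ½c₀s²` is convex (with `c₀ ≥ 0`), then
`F'(φ)(λ - φ) ≤ F(λ) + (3/2)c₀φ² + c₀λ²` for all `φ, λ`. -/
theorem potential_derivative_estimate
    (c₀ : ℝ) (hc₀ : 0 ≤ c₀)
    (F : ℝ → ℝ) (hdiff : Differentiable ℝ F) (hnonneg : ∀ s : ℝ, 0 ≤ F s)
    (hconv : ConvexOn ℝ Set.univ (fun s : ℝ => F s + (1 / 2) * c₀ * s ^ 2)) :
    ∀ φ l : ℝ, deriv F φ * (l - φ) ≤ F l + (3 / 2) * c₀ * φ ^ 2 + c₀ * l ^ 2 := by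
  intro φ l
  have hsemiconvex := mul_sub_le_of_convexOn_add_sq_of_hasDerivAt hconv (hdiff φ).hasDerivAt l
  have hsq : (1 / 2) * c₀ * (l - φ) ^ 2 ≤ (3 / 2) * c₀ * φ ^ 2 + c₀ * l ^ 2 := by
    nlinarith [mul_nonneg hc₀ (sq_nonneg (l + φ)), mul_nonneg hc₀ (sq_nonneg φ)]
  linarith [hnonneg φ]
end
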